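/- Let G be a brick, and let f1 and f2 be two edges of G sharing a common endpoint. If S1 is a barrier of G − f1 and S2 is a barrier of G − f2, then |S1 ∩ S2| ≤ 1. -/

import Mathlib

open SimpleGraph Set

universe u
variable {V : Type u}

/-- Number of odd components of a graph. -/
noncomputable def oddComps (G : SimpleGraph V) : ℕ :=
  Nat.card {c : G.ConnectedComponent // Odd (Nat.card c.supp)}

/-- `S` is a barrier of `G`: the number of odd components of `G − S` equals `|S|`. -/
def IsBarrier (G : SimpleGraph V) (S : Set V) : Prop :=
  oddComps (G.induce Sᶜ) = S.ncard

/-- `G` has a perfect matching. -/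
def HasPM (G : SimpleGraph V) : Prop :=
  ∃ M : Subgraph G, M.IsPerfectMatching

/-- `G` is matching covered. -/
def MatchingCovered (G : SimpleGraph V) : Prop :=
  G.Connected ∧ G.edgeSet.Nonempty ∧
    ∀ e ∈ G.edgeSet, ∃ M : Subgraph G, M.IsPerfectMatching ∧ e ∈ M.edgeSet

/-- An edge `e` of a matching covered graph `G` is removable. -/
def Removable (G : SimpleGraph V) (e : Sym2 V) : Prop :=
  e ∈ G.edgeSet ∧ MatchingCovered (G.deleteEdges {e})

/-- `G` is 3-connected. -/
def ThreeConnected (G : SimpleGraph V) : Prop :=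
  4 ≤ Nat.card V ∧ ∀ S : Set V, S.ncard ≤ 2 → (G.induce Sᶜ).Connected

/-- A brick. -/
def IsBrick (G : SimpleGraph V) : Prop :=
  ThreeConnected G ∧ ∀ x y : V, x ≠ y → HasPM (G.induce ({x, y} : Set V)ᶜ)

/-- neighbours outside `S` of vertices of `S`. -/
def Nbrs (G : SimpleGraph V) (S : Set V) : Set V :=
  {v | v ∉ S ∧ ∃ u ∈ S, G.Adj u v}

/-- factor-critical graph. -/
def FactorCritical (G : SimpleGraph V) : Prop :=
  ∀ v : V, HasPM (G.induce ({v} : Set V)ᶜ)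

/-- `(U, W)` is a bipartition of `G`. -/
def IsBipartition (G : SimpleGraph V) (U W : Set V) : Prop :=
  Disjoint U W ∧ U ∪ W = Set.univ ∧
    ∀ a b : V, G.Adj a b → (a ∈ U ∧ b ∈ W) ∨ (a ∈ W ∧ b ∈ U)

/-!
If `x ≠ y` both lie in `S1 ∩ S2`, the brick `G` has a perfect matching `M` of `G - x - y`.
Two edges at `u` cannot both lie in the matching `M`, so `M` is also a perfect matching of
`(G - fᵢ) - x - y` for some `i`. But removing the two vertices `x, y` of the barrier `Sᵢ` of
`G - fᵢ` and then the remaining `|Sᵢ| - 2` vertices of `Sᵢ` leaves `|Sᵢ|` odd components,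
contradicting Tutte's condition for `(G - fᵢ) - x - y`.
-/

section

variable {G : SimpleGraph V}

lemma oddComps_eq_ncard_oddComponents (G : SimpleGraph V) :
    oddComps G = G.oddComponents.ncard := by
  simp only [oddComps, ← Nat.card_coe_set_eq, Set.coe_ofPred]

theorem SimpleGraph.Iso.oddComps_eq {W : Type*} {H : SimpleGraph W} (φ : G ≃g H) :
    oddComps G = oddComps H := by
  refine Nat.card_congr <| Equiv.subtypeEquiv φ.connectedComponentEquiv fun c => ?_
  have hsupp : (φ.connectedComponentEquiv c).supp = φ.toEquiv '' c.supp := by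
    ext w
    rw [Set.mem_image_equiv]
    exact (ConnectedComponent.iso_inv_image_comp_eq_iff_eq_map (φ := φ)).symm
  rw [hsupp, Nat.card_coe_set_eq, Nat.card_coe_set_eq,
    Set.ncard_image_of_injective _ φ.toEquiv.injective]

def SimpleGraph.deleteVertsTopIso (G : SimpleGraph V) (T : Set V) :
    ((⊤ : G.Subgraph).deleteVerts T).coe ≃g G.induce Tᶜ where
  toFun v := ⟨v, v.2.2⟩
  invFun v := ⟨v, trivial, v.2⟩
  map_rel_iff' := by simp +contextual

lemma oddComps_induce_compl_le_ncard [Finite V] (hG : HasPM G) (T : Set V) :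
    oddComps (G.induce Tᶜ) ≤ T.ncard := by
  obtain ⟨M, hM⟩ := hG
  rw [← (deleteVertsTopIso G T).oddComps_eq, oddComps_eq_ncard_oddComponents]
  exact not_lt.mp (not_isTutteViolator_of_isPerfectMatching hM T)

def SimpleGraph.induceComplInduceIso (G : SimpleGraph V) {S T : Set V} (hTS : T ⊆ S) :
    (G.induce Tᶜ).induce {v : ↥Tᶜ | (v : V) ∈ S}ᶜ ≃g G.induce Sᶜ where
  toFun v := ⟨v.1.1, v.2⟩
  invFun v := ⟨⟨v.1, fun h => v.2 (hTS h)⟩, v.2⟩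
  map_rel_iff' := Iff.rfl

lemma IsBarrier.not_hasPM_induce_compl [Finite V] {S T : Set V} (hS : IsBarrier G S)
    (hTS : T ⊆ S) (hT : T.Nonempty) : ¬ HasPM (G.induce Tᶜ) := by
  intro hPM
  have hle := oddComps_induce_compl_le_ncard hPM {v : ↥Tᶜ | (v : V) ∈ S}
  have hcard : {v : ↥Tᶜ | (v : V) ∈ S}.ncard = (S \ T).ncard := by
    rw [← Set.ncard_image_of_injective _ Subtype.val_injective]
    congr 1
    ext v
    simp [and_comm]
  rw [(induceComplInduceIso G hTS).oddComps_eq, hS, hcard, Set.ncard_sdiff hTS] at hle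
  have hT_pos := (Set.ncard_pos).2 hT
  have hT_le := Set.ncard_le_ncard hTS
  omega

lemma hasPM_induce_deleteEdges {W : Set V} {M : (G.induce W).Subgraph}
    (hM : M.IsPerfectMatching) {e : Sym2 V} (he : ∀ v w, M.Adj v w → s((v : V), w) ≠ e) :
    HasPM ((G.deleteEdges {e}).induce W) :=
  ⟨⟨M.verts, M.Adj, fun h => ⟨M.adj_sub h, fun he' => he _ _ h ((fromEdgeSet_adj _).1 he').1⟩,
    M.edge_vert, M.symm⟩, hM⟩

lemma SimpleGraph.Subgraph.IsMatching.forall_ne_or_forall_ne {W : Set V} {G' : SimpleGraph W}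
    {M : G'.Subgraph} (hM : M.IsMatching) {u a b : V} (hab : a ≠ b) :
    (∀ v w, M.Adj v w → s((v : V), w) ≠ s(u, a)) ∨
      (∀ v w, M.Adj v w → s((v : V), w) ≠ s(u, b)) := by
  have matched (c : V) : (∃ v w, M.Adj v w ∧ s((v : V), w) = s(u, c)) →
      ∃ v w, M.Adj v w ∧ (v : V) = u ∧ (w : V) = c := by
    rintro ⟨v, w, hvw, h⟩
    rcases Sym2.eq_iff.mp h with ⟨hv, hw⟩ | ⟨hw, hv⟩
    · exact ⟨v, w, hvw, hv, hw⟩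
    · exact ⟨w, v, hvw.symm, hv, hw⟩
  by_contra! h
  obtain ⟨v, w, hvw, rfl, rfl⟩ := matched a h.1
  obtain ⟨v', w', hvw', hv', rfl⟩ := matched b h.2
  obtain rfl : v = v' := Subtype.ext hv'.symm
  exact hab (congrArg Subtype.val (hM.eq_of_adj_left hvw hvw'))

end

theorem stmt6_general [Fintype V] (G : SimpleGraph V) (hG : IsBrick G)
    (u a b : V)
    (hne : s(u, a) ≠ s(u, b)) (S1 S2 : Set V)
    (h1 : IsBarrier (G.deleteEdges {s(u, a)}) S1)
    (h2 : IsBarrier (G.deleteEdges {s(u, b)}) S2) :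
    (S1 ∩ S2).ncard ≤ 1 := by
  refine (Set.ncard_le_one_iff (S1 ∩ S2).toFinite).2 fun {x y} hx hy => by_contra fun hxy => ?_
  obtain ⟨M, hM⟩ := hG.2 x y hxy
  have hab : a ≠ b := fun h => hne (h ▸ rfl)
  rcases hM.1.forall_ne_or_forall_ne (u := u) hab with hav | hav
  · exact h1.not_hasPM_induce_compl (pair_subset hx.1 hy.1) (insert_nonempty _ _)
      (hasPM_induce_deleteEdges hM hav)
  · exact h2.not_hasPM_induce_compl (pair_subset hx.2 hy.2) (insert_nonempty _ _)
      (hasPM_induce_deleteEdges hM hav)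

/-- barriers of `G − f₁` and `G − f₂` for adjacent edges `f₁, f₂`
of a brick intersect in at most one vertex. -/
theorem stmt6 [Fintype V] (G : SimpleGraph V) (hG : IsBrick G)
    (u a b : V) (hua : G.Adj u a) (hub : G.Adj u b)
    (hne : s(u, a) ≠ s(u, b)) (S1 S2 : Set V)
    (h1 : IsBarrier (G.deleteEdges {s(u, a)}) S1)
    (h2 : IsBarrier (G.deleteEdges {s(u, b)}) S2) :
    (S1 ∩ S2).ncard ≤ 1 :=
  stmt6_general G hG u a b hne S1 S2 h1 h2
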